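/- arXiv:1810.08595 — 2 statements merged into one kernel-verified Lean document; each statement's English description precedes it below -/
import Mathlib

section
/- For any two orthogonal projections P and Q on a finite-dimensional real inner product space, the operator norm of their commutator satisfies ‖PQ − QP‖₂ ≤ 1/2. -/
/-! The symmetries `2p - 1` and `2q - 1` of two star projections are unitaries, hence have norm
at most `1`, and their commutator is `4 (pq - qp)`; so `4 ‖pq - qp‖ ≤ 2`. -/

lemma CStarRing.norm_le_one_of_mem_unitary {A : Type*} [NormedRing A] [StarRing A] [CStarRing A]
    {u : A} (hu : u ∈ unitary A) : ‖u‖ ≤ 1 := by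
  rcases subsingleton_or_nontrivial A with _ | _
  · simp [Subsingleton.elim u 0]
  · exact (CStarRing.norm_of_mem_unitary hu).le

lemma norm_commutator_le_half_of_norm_two_mul_sub_one_le {A : Type*} [SeminormedRing A]
    [NormedSpace ℝ A] {p q : A} (hp : ‖2 * p - 1‖ ≤ 1) (hq : ‖2 * q - 1‖ ≤ 1) :
    ‖p * q - q * p‖ ≤ 1 / 2 := by
  have hcomm : (2 * p - 1) * (2 * q - 1) - (2 * q - 1) * (2 * p - 1) = 4 • (p * q - q * p) := by
    noncomm_ring
  have : 4 * ‖p * q - q * p‖ ≤ 2 := by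
    calc 4 * ‖p * q - q * p‖ = ‖(2 * p - 1) * (2 * q - 1) - (2 * q - 1) * (2 * p - 1)‖ := by
          rw [hcomm, ← Nat.cast_smul_eq_nsmul ℝ, norm_smul]; norm_num
      _ ≤ ‖2 * p - 1‖ * ‖2 * q - 1‖ + ‖2 * q - 1‖ * ‖2 * p - 1‖ :=
          (norm_sub_le _ _).trans (add_le_add (norm_mul_le _ _) (norm_mul_le _ _))
      _ ≤ 1 * 1 + 1 * 1 := by gcongr
      _ = 2 := by norm_num
  linarith

theorem IsStarProjection.norm_commutator_le_half {A : Type*} [NormedRing A] [StarRing A]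
    [CStarRing A] [NormedSpace ℝ A] {p q : A} (hp : IsStarProjection p)
    (hq : IsStarProjection q) : ‖p * q - q * p‖ ≤ 1 / 2 :=
  norm_commutator_le_half_of_norm_two_mul_sub_one_le
    (CStarRing.norm_le_one_of_mem_unitary hp.two_mul_sub_one_mem_unitary)
    (CStarRing.norm_le_one_of_mem_unitary hq.two_mul_sub_one_mem_unitary)

/-- For any two orthogonal projections `P`, `Q` on a finite-dimensional real inner product
space, the operator norm of their commutator is at most `1/2`. -/
theorem commutator_opNorm_le_half
    {E : Type*} [NormedAddCommGroup E] [InnerProductSpace ℝ E] [FiniteDimensional ℝ E]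
    (P Q : E →L[ℝ] E)
    (hPsa : IsSelfAdjoint P) (hPidem : P ∘L P = P)
    (hQsa : IsSelfAdjoint Q) (hQidem : Q ∘L Q = Q) :
    ‖P ∘L Q - Q ∘L P‖ ≤ 1 / 2 :=
  IsStarProjection.norm_commutator_le_half ⟨hPidem, hPsa⟩ ⟨hQidem, hQsa⟩
end

section
/- Let P_avg be a self-adjoint operator with eigenvalues in [0,1] on ℝ^{p₁×p₂} of the form P_avg = (1/B) Σ_ℓ P_{T_ℓ}, where each P_{T_ℓ} = P_{C_ℓ} ⊗ I + I ⊗ P_{R_ℓ} − P_{C_ℓ} ⊗ P_{R_ℓ} is a tangent-space projection, and define P_avg^C = (1/B) Σ_ℓ P_{C_ℓ} and P_avg^R = (1/B) Σ_ℓ P_{R_ℓ}. Let C ⊆ ℝ^{p₁}, R ⊆ ℝ^{p₂} be subspaces with σ_min(P_C P_avg^C P_C) ≥ α and σ_min(P_R P_avg^R P_R) ≥ α restricted to C and R respectively, and let T = T(C,R) with projection P_T. Then ‖P_T (I − P_avg) P_T‖₂ ≤ 4(1 − α), and consequently σ_min(P_T P_avg P_T) restricted to T is at least 1 − 4(1 −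 α). -/
/-!
Write `N ∈ T(C,R)` as `N = P_C N + (I - P_C) N P_R`, an orthogonal sum. Since
`I - P_avg = (1/B) ∑ (I - P_{C_ℓ}) ⊗ (I - P_{R_ℓ})`, the quadratic form `⟪N, (I - P_avg) N⟫` is the
average of `‖(I - P_{C_ℓ}) N (I - P_{R_ℓ})‖²`, and each term is at most
`2 (‖(I - P_{C_ℓ}) P_C N‖² + ‖(I - P_C) N P_R (I - P_{R_ℓ})‖²)`. Applied column by column and
averaged with Cauchy–Schwarz, the `σ_min` hypothesis on `C` gives `(1/B) ∑ ‖P_{C_ℓ} n‖² ≥ α² ‖n‖²`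
whenever `P_C n = n`, and similarly on `R`; hence the form is at most
`2 (1 - α²) ‖N‖² ≤ 4 (1 - α) ‖N‖²`. As `P_T (I - P_avg) P_T` is self-adjoint and positive
semidefinite, its operator norm is the supremum of its Rayleigh quotient, which gives the first
bound; the second is the triangle inequality.
-/

open Matrix

/-- Euclidean norm of a vector in `ℝ^p`. -/
noncomputable def vnorm {p : ℕ} (x : Fin p → ℝ) : ℝ :=
  Real.sqrt (∑ i, x i ^ 2)

/-- Frobenius norm of a real matrix. -/
noncomputable def fnorm {p₁ p₂ : ℕ} (M : Matrix (Fin p₁) (Fin p₂) ℝ) : ℝ :=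
  Real.sqrt (Matrix.trace (Mᵀ * M))

open scoped RealInnerProductSpace

section InnerProductSpace

variable {E : Type*} [NormedAddCommGroup E] [InnerProductSpace ℝ E]

theorem LinearMap.IsSymmetric.norm_apply_le_of_inner_le [CompleteSpace E] {T : E →ₗ[ℝ] E}
    (hT : T.IsSymmetric) {β : ℝ} (hβ : 0 ≤ β) (hpos : ∀ x, 0 ≤ ⟪T x, x⟫)
    (hle : ∀ x, ⟪T x, x⟫ ≤ β * ‖x‖ ^ 2) (x : E) : ‖T x‖ ≤ β * ‖x‖ := by
  let S : E →L[ℝ] E := ⟨T, hT.continuous⟩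
  have hS : ‖S‖ ≤ β := by
    rw [S.norm_eq_iSup_rayleighQuotient hT]
    refine ciSup_le fun y => ?_
    rw [ContinuousLinearMap.rayleighQuotient, ContinuousLinearMap.reApplyInnerSelf_apply,
      RCLike.re_to_real, abs_div, abs_sq, abs_of_nonneg (show 0 ≤ ⟪S y, y⟫ from hpos y)]
    exact div_le_of_le_mul₀ (sq_nonneg _) hβ (hle y)
  exact S.le_of_opNorm_le hS x

theorem norm_le_norm_of_norm_sq_eq_inner {x y : E} (h : ‖y‖ ^ 2 = ⟪x, y⟫) : ‖y‖ ≤ ‖x‖ := by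
  nlinarith [real_inner_le_norm x y, norm_nonneg x, norm_nonneg y]

theorem LinearMap.IsSymmetricProjection.norm_apply_le {P : E →ₗ[ℝ] E}
    (hP : P.IsSymmetricProjection) (x : E) : ‖P x‖ ≤ ‖x‖ := by
  refine norm_le_norm_of_norm_sq_eq_inner ?_
  rw [← real_inner_self_eq_norm_sq, hP.isSymmetric, ← Module.End.mul_apply,
    hP.isIdempotentElem.eq]

theorem LinearMap.IsSymmetricProjection.norm_compress_sub_le [CompleteSpace E]
    {P A : E →ₗ[ℝ] E} (hP : P.IsSymmetricProjection) (hA : A.IsSymmetric) {β : ℝ} (hβ : 0 ≤ β)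
    (hpos : ∀ x, P x = x → 0 ≤ ⟪x - A x, x⟫)
    (hle : ∀ x, P x = x → ⟪x - A x, x⟫ ≤ β * ‖x‖ ^ 2) (x : E) :
    ‖P (P x - A (P x))‖ ≤ β * ‖x‖ := by
  have hPP : ∀ x, P (P x) = P x := fun x => by
    rw [← Module.End.mul_apply, hP.isIdempotentElem.eq]
  let S := P ∘ₗ (LinearMap.id - A) ∘ₗ P
  have hS : S.IsSymmetric := fun x y => by
    simp only [S, LinearMap.comp_apply, LinearMap.sub_apply, LinearMap.id_apply]
    rw [hP.isSymmetric, inner_sub_left, ← hP.isSymmetric x, inner_sub_right, hA]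
  have hSx : ∀ x, ⟪S x, x⟫ = ⟪P x - A (P x), P x⟫ := fun x => hP.isSymmetric _ _
  refine hS.norm_apply_le_of_inner_le hβ (fun x => ?_) (fun x => ?_) x
  · rw [hSx]; exact hpos _ (hPP x)
  · rw [hSx]
    calc _ ≤ β * ‖P x‖ ^ 2 := hle _ (hPP x)
      _ ≤ β * ‖x‖ ^ 2 := by gcongr; exact hP.norm_apply_le x

end InnerProductSpace

attribute [local instance] Matrix.frobeniusNormedAddCommGroup Matrix.frobeniusNormedSpace

theorem Matrix.frobenius_norm_sq {m n : Type*} [Fintype m] [Fintype n] (X : Matrix m n ℝ) :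
    ‖X‖ ^ 2 = ∑ i, ∑ j, X i j ^ 2 := by
  rw [frobenius_norm_def, ← Real.sqrt_eq_rpow, Real.sq_sqrt (by positivity)]
  simp

/-- The Frobenius norm, a local instance in Mathlib, comes from the trace inner product. -/
noncomputable abbrev Matrix.frobeniusInnerProductSpace {m n : Type*} [Fintype m] [Fintype n] :
    InnerProductSpace ℝ (Matrix m n ℝ) where
  inner X Y := (Xᵀ * Y).trace
  norm_sq_eq_re_inner X := by
    simp only [frobenius_norm_sq, trace, diag, mul_apply, transpose_apply, RCLike.re_to_real]
    rw [Finset.sum_comm]; simp [sq]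
  conj_inner_symm X Y := by
    simp only [conj_trivial]
    rw [← trace_transpose, transpose_mul, transpose_transpose]
  add_left X Y Z := by simp [Matrix.transpose_add, Matrix.add_mul]
  smul_left X Y r := by simp

attribute [local instance] Matrix.frobeniusInnerProductSpace

namespace Matrix

section Frobenius

variable {m n : Type*} [Fintype m] [Fintype n]

theorem frobenius_inner_def (X Y : Matrix m n ℝ) : ⟪X, Y⟫ = (Xᵀ * Y).trace := rfl

theorem frobenius_inner_mul_left {l : Type*} [Fintype l] (A : Matrix l m ℝ) (X : Matrix m n ℝ)
    (Y : Matrix l n ℝ) : ⟪A * X, Y⟫ = ⟪X, Aᵀ * Y⟫ := by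
  rw [frobenius_inner_def, frobenius_inner_def, transpose_mul, Matrix.mul_assoc]

theorem frobenius_inner_mul_right {l : Type*} [Fintype l] (X : Matrix m l ℝ) (D : Matrix l n ℝ)
    (Y : Matrix m n ℝ) : ⟪X * D, Y⟫ = ⟪X, Y * Dᵀ⟫ := by
  rw [frobenius_inner_def, frobenius_inner_def, transpose_mul, Matrix.mul_assoc,
    trace_mul_comm, Matrix.mul_assoc]

theorem frobenius_inner_mul_mul (A : Matrix m m ℝ) (X : Matrix m n ℝ) (D : Matrix n n ℝ)
    (Y : Matrix m n ℝ) : ⟪A * X * D, Y⟫ = ⟪X, Aᵀ * Y * Dᵀ⟫ := by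
  rw [frobenius_inner_mul_right, frobenius_inner_mul_left, Matrix.mul_assoc]

end Frobenius

theorem fnorm_eq_norm {p₁ p₂ : ℕ} (X : Matrix (Fin p₁) (Fin p₂) ℝ) : fnorm X = ‖X‖ := by
  rw [norm_eq_sqrt_real_inner, frobenius_inner_def, fnorm]

def IsOrthogonalProjection {m : Type*} [Fintype m] (A : Matrix m m ℝ) : Prop :=
  Aᵀ = A ∧ A * A = A

namespace IsOrthogonalProjection

variable {m n : Type*} [Fintype m] [Fintype n] {A : Matrix m m ℝ}

theorem one_sub [DecidableEq m] (hA : IsOrthogonalProjection A) :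
    IsOrthogonalProjection (1 - A) := by
  refine ⟨by rw [transpose_sub, transpose_one, hA.1], ?_⟩
  rw [Matrix.sub_mul, Matrix.mul_sub, Matrix.mul_sub, hA.2]
  simp

theorem inner_mul_one_sub_mul [DecidableEq m] (hA : IsOrthogonalProjection A)
    (X Y : Matrix m n ℝ) : ⟪A * X, (1 - A) * Y⟫ = 0 := by
  rw [frobenius_inner_mul_left, ← Matrix.mul_assoc, hA.1, Matrix.mul_sub, hA.2]
  simp

theorem inner_mul_mul_self (hA : IsOrthogonalProjection A) {D : Matrix n n ℝ}
    (hD : IsOrthogonalProjection D) (X : Matrix m n ℝ) : ⟪A * X * D, X⟫ = ‖A * X * D‖ ^ 2 := by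
  rw [← real_inner_self_eq_norm_sq, real_inner_comm, frobenius_inner_mul_mul, hA.1, hD.1]
  simp only [← Matrix.mul_assoc, hA.2]
  simp only [Matrix.mul_assoc, hD.2]

theorem norm_mul_le_norm_right (hA : IsOrthogonalProjection A) (X : Matrix m n ℝ) :
    ‖A * X‖ ≤ ‖X‖ := by
  refine norm_le_norm_of_norm_sq_eq_inner ?_
  rw [← real_inner_self_eq_norm_sq, frobenius_inner_mul_left, hA.1, ← Matrix.mul_assoc, hA.2]

theorem norm_mul_le_norm_left {D : Matrix n n ℝ} (hD : IsOrthogonalProjection D)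
    (X : Matrix m n ℝ) : ‖X * D‖ ≤ ‖X‖ := by
  refine norm_le_norm_of_norm_sq_eq_inner ?_
  rw [← real_inner_self_eq_norm_sq, frobenius_inner_mul_right, hD.1, Matrix.mul_assoc, hD.2]

end IsOrthogonalProjection

section TangentSpace

variable {m n : Type*} [Fintype m] [Fintype n]

def tangentProj (P : Matrix m m ℝ) (Q : Matrix n n ℝ) : Matrix m n ℝ →ₗ[ℝ] Matrix m n ℝ where
  toFun X := P * X + X * Q - P * X * Q
  map_add' X Y := by
    simp only [Matrix.mul_add, Matrix.add_mul]
    abel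
  map_smul' r X := by simp [smul_sub, smul_add]

theorem tangentProj_apply (P : Matrix m m ℝ) (Q : Matrix n n ℝ) (X : Matrix m n ℝ) :
    tangentProj P Q X = P * X + X * Q - P * X * Q := rfl

theorem tangentProj_apply_eq_sub [DecidableEq m] [DecidableEq n] (P : Matrix m m ℝ)
    (Q : Matrix n n ℝ) (X : Matrix m n ℝ) : tangentProj P Q X = X - (1 - P) * X * (1 - Q) := by
  simp only [tangentProj_apply, Matrix.sub_mul, Matrix.mul_sub, Matrix.one_mul, Matrix.mul_one]
  abel

theorem tangentProj_apply_eq_add [DecidableEq m] (P : Matrix m m ℝ) (Q : Matrix n n ℝ)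
    (X : Matrix m n ℝ) : tangentProj P Q X = P * X + (1 - P) * X * Q := by
  simp only [tangentProj_apply, Matrix.sub_mul, Matrix.one_mul]
  abel

theorem IsOrthogonalProjection.isSymmetricProjection_tangentProj {P : Matrix m m ℝ}
    {Q : Matrix n n ℝ} (hP : IsOrthogonalProjection P) (hQ : IsOrthogonalProjection Q) :
    (tangentProj P Q).IsSymmetricProjection := by
  classical
  refine ⟨LinearMap.ext fun X => ?_, fun X Y => ?_⟩
  · rw [Module.End.mul_apply, tangentProj_apply_eq_sub _ _ (tangentProj P Q X),
      tangentProj_apply_eq_sub P Q X]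
    set A := 1 - P
    set D := 1 - Q
    rw [Matrix.mul_sub A X, Matrix.sub_mul _ _ D, ← Matrix.mul_assoc A (A * X) D,
      ← Matrix.mul_assoc A A X, hP.one_sub.2, Matrix.mul_assoc (A * X) D D, hQ.one_sub.2,
      sub_self, sub_zero]
  · rw [tangentProj_apply_eq_sub, tangentProj_apply_eq_sub, inner_sub_left, inner_sub_right,
      frobenius_inner_mul_mul, hP.one_sub.1, hQ.one_sub.1]

end TangentSpace

section Average

variable {m n : Type*} [Fintype m] [Fintype n] {B : ℕ}

noncomputable def avgTangentProj (Cb : Fin B → Matrix m m ℝ) (Rb : Fin B → Matrix n n ℝ) :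
    Matrix m n ℝ →ₗ[ℝ] Matrix m n ℝ :=
  (B : ℝ)⁻¹ • ∑ ℓ, tangentProj (Cb ℓ) (Rb ℓ)

theorem avgTangentProj_apply (Cb : Fin B → Matrix m m ℝ) (Rb : Fin B → Matrix n n ℝ)
    (X : Matrix m n ℝ) :
    avgTangentProj Cb Rb X = (B : ℝ)⁻¹ • ∑ ℓ, (Cb ℓ * X + X * Rb ℓ - Cb ℓ * X * Rb ℓ) := by
  simp [avgTangentProj, LinearMap.sum_apply, tangentProj_apply]

theorem isSymmetric_avgTangentProj {Cb : Fin B → Matrix m m ℝ} {Rb : Fin B → Matrix n n ℝ}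
    (hCb : ∀ ℓ, IsOrthogonalProjection (Cb ℓ)) (hRb : ∀ ℓ, IsOrthogonalProjection (Rb ℓ)) :
    (avgTangentProj Cb Rb).IsSymmetric :=
  (LinearMap.isSymmetric_sum _ fun ℓ _ =>
    ((hCb ℓ).isSymmetricProjection_tangentProj (hRb ℓ)).isSymmetric).smul (by simp)

theorem sub_avgTangentProj_apply [DecidableEq m] [DecidableEq n] (hB : 0 < B)
    (Cb : Fin B → Matrix m m ℝ) (Rb : Fin B → Matrix n n ℝ) (X : Matrix m n ℝ) :
    X - avgTangentProj Cb Rb X = (B : ℝ)⁻¹ • ∑ ℓ, (1 - Cb ℓ) * X * (1 - Rb ℓ) := by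
  simp only [avgTangentProj, LinearMap.smul_apply, LinearMap.sum_apply, tangentProj_apply_eq_sub,
    Finset.sum_sub_distrib, smul_sub, Finset.sum_const, Finset.card_univ, Fintype.card_fin]
  rw [← Nat.cast_smul_eq_nsmul ℝ, smul_smul, inv_mul_cancel₀ (by positivity), one_smul,
    sub_sub_cancel]

theorem inner_sub_avgTangentProj_self [DecidableEq m] [DecidableEq n] (hB : 0 < B)
    {Cb : Fin B → Matrix m m ℝ} {Rb : Fin B → Matrix n n ℝ}
    (hCb : ∀ ℓ, IsOrthogonalProjection (Cb ℓ)) (hRb : ∀ ℓ, IsOrthogonalProjection (Rb ℓ))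
    (X : Matrix m n ℝ) :
    ⟪X - avgTangentProj Cb Rb X, X⟫ = (B : ℝ)⁻¹ * ∑ ℓ, ‖(1 - Cb ℓ) * X * (1 - Rb ℓ)‖ ^ 2 := by
  rw [sub_avgTangentProj_apply hB, real_inner_smul_left, sum_inner]
  simp only [(hCb _).one_sub.inner_mul_mul_self (hRb _).one_sub]

end Average

section Columns

variable {p : ℕ} {ι : Type*} [Fintype ι]

theorem vnorm_sq (x : Fin p → ℝ) : vnorm x ^ 2 = ∑ i, x i ^ 2 :=
  Real.sq_sqrt (Finset.sum_nonneg fun _ _ => sq_nonneg _)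

theorem frobenius_norm_sq_eq_sum_vnorm_sq (X : Matrix (Fin p) ι ℝ) :
    ‖X‖ ^ 2 = ∑ j, vnorm (Xᵀ j) ^ 2 := by
  simp only [vnorm_sq, frobenius_norm_sq, transpose_apply]
  exact Finset.sum_comm

theorem mul_norm_le_norm_mul_of_forall_mulVec {P A : Matrix (Fin p) (Fin p) ℝ} {α : ℝ}
    (hα : 0 ≤ α) (h : ∀ x, P *ᵥ x = x → α * vnorm x ≤ vnorm (A *ᵥ x))
    {X : Matrix (Fin p) ι ℝ} (hX : P * X = X) : α * ‖X‖ ≤ ‖A * X‖ := by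
  have hcol : ∀ (M : Matrix (Fin p) (Fin p) ℝ) j, (M * X)ᵀ j = M *ᵥ Xᵀ j := fun M j => by
    ext i
    simp [mul_apply, mulVec, dotProduct]
  refine (pow_le_pow_iff_left₀ (by positivity) (norm_nonneg _) two_ne_zero).mp ?_
  rw [mul_pow, frobenius_norm_sq_eq_sum_vnorm_sq, frobenius_norm_sq_eq_sum_vnorm_sq,
    Finset.mul_sum]
  gcongr with j
  rw [← mul_pow, hcol]
  exact pow_le_pow_left₀ (by unfold vnorm; positivity) (h _ (by rw [← hcol, hX])) 2

end Columns

theorem IsOrthogonalProjection.sum_norm_one_sub_mul_sq_le {p B : ℕ} {ι : Type*} [Fintype ι]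
    (hB : 0 < B) {Cb : Fin B → Matrix (Fin p) (Fin p) ℝ}
    (hCb : ∀ ℓ, IsOrthogonalProjection (Cb ℓ)) {P : Matrix (Fin p) (Fin p) ℝ}
    (hP : IsOrthogonalProjection P) {α : ℝ} (hα : 0 ≤ α)
    (hσ : ∀ x, P *ᵥ x = x → α * vnorm x ≤ vnorm ((P * ((B : ℝ)⁻¹ • ∑ ℓ, Cb ℓ) * P) *ᵥ x))
    {X : Matrix (Fin p) ι ℝ} (hX : P * X = X) :
    ∑ ℓ, ‖(1 - Cb ℓ) * X‖ ^ 2 ≤ B * (1 - α ^ 2) * ‖X‖ ^ 2 := by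
  have hB' : (0 : ℝ) < B := by exact_mod_cast hB
  have hlower : α * ‖X‖ ≤ (B : ℝ)⁻¹ * ∑ ℓ, ‖Cb ℓ * X‖ := calc
    α * ‖X‖ ≤ ‖P * ((B : ℝ)⁻¹ • ∑ ℓ, Cb ℓ) * P * X‖ :=
        mul_norm_le_norm_mul_of_forall_mulVec hα hσ hX
    _ = ‖P * ((B : ℝ)⁻¹ • ∑ ℓ, Cb ℓ * X)‖ := by
        rw [Matrix.mul_assoc _ P X, hX, Matrix.mul_assoc, Matrix.smul_mul, Matrix.sum_mul]
    _ ≤ ‖(B : ℝ)⁻¹ • ∑ ℓ, Cb ℓ * X‖ := hP.norm_mul_le_norm_right _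
    _ ≤ (B : ℝ)⁻¹ * ∑ ℓ, ‖Cb ℓ * X‖ := by
        rw [norm_smul, Real.norm_of_nonneg (by positivity)]
        gcongr
        exact norm_sum_le _ _
  have hcs : (∑ ℓ, ‖Cb ℓ * X‖) ^ 2 ≤ B * ∑ ℓ, ‖Cb ℓ * X‖ ^ 2 := by
    simpa using sq_sum_le_card_mul_sum_sq (s := Finset.univ) (f := fun ℓ => ‖Cb ℓ * X‖)
  have hupper : B * (α * ‖X‖) ^ 2 ≤ ∑ ℓ, ‖Cb ℓ * X‖ ^ 2 := calc
    B * (α * ‖X‖) ^ 2 ≤ B * ((B : ℝ)⁻¹ * ∑ ℓ, ‖Cb ℓ * X‖) ^ 2 := by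
        gcongr
    _ = (B : ℝ)⁻¹ * (∑ ℓ, ‖Cb ℓ * X‖) ^ 2 := by field_simp
    _ ≤ (B : ℝ)⁻¹ * (B * ∑ ℓ, ‖Cb ℓ * X‖ ^ 2) := by gcongr
    _ = ∑ ℓ, ‖Cb ℓ * X‖ ^ 2 := by field_simp
  have hpyth : ∀ ℓ, ‖(1 - Cb ℓ) * X‖ ^ 2 = ‖X‖ ^ 2 - ‖Cb ℓ * X‖ ^ 2 := fun ℓ => by
    have h := norm_add_sq_real (Cb ℓ * X) ((1 - Cb ℓ) * X)
    rw [(hCb ℓ).inner_mul_one_sub_mul, ← Matrix.add_mul, add_sub_cancel, Matrix.one_mul] at h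
    linarith
  rw [Finset.sum_congr rfl fun ℓ _ => hpyth ℓ, Finset.sum_sub_distrib, Finset.sum_const,
    Finset.card_univ, Fintype.card_fin, nsmul_eq_mul]
  linarith

theorem inner_sub_avgTangentProj_le {p₁ p₂ B : ℕ} (hB : 0 < B)
    {Cb : Fin B → Matrix (Fin p₁) (Fin p₁) ℝ} {Rb : Fin B → Matrix (Fin p₂) (Fin p₂) ℝ}
    (hCb : ∀ ℓ, IsOrthogonalProjection (Cb ℓ)) (hRb : ∀ ℓ, IsOrthogonalProjection (Rb ℓ))
    {PC : Matrix (Fin p₁) (Fin p₁) ℝ} {PR : Matrix (Fin p₂) (Fin p₂) ℝ}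
    (hPC : IsOrthogonalProjection PC) (hPR : IsOrthogonalProjection PR) {α : ℝ} (hα : 0 ≤ α)
    (hσC : ∀ x, PC *ᵥ x = x → α * vnorm x ≤ vnorm ((PC * ((B : ℝ)⁻¹ • ∑ ℓ, Cb ℓ) * PC) *ᵥ x))
    (hσR : ∀ y, PR *ᵥ y = y → α * vnorm y ≤ vnorm ((PR * ((B : ℝ)⁻¹ • ∑ ℓ, Rb ℓ) * PR) *ᵥ y))
    {N : Matrix (Fin p₁) (Fin p₂) ℝ} (hN : tangentProj PC PR N = N) :
    ⟪N - avgTangentProj Cb Rb N, N⟫ ≤ 4 * (1 - α) * ‖N‖ ^ 2 := by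
  set n₁ := PC * N
  set n₂ := (1 - PC) * N * PR
  have hsplit : N = n₁ + n₂ := by rw [← tangentProj_apply_eq_add, hN]
  have horth : ⟪n₁, n₂⟫ = 0 := by
    rw [show n₂ = (1 - PC) * (N * PR) from Matrix.mul_assoc _ _ _]
    exact hPC.inner_mul_one_sub_mul _ _
  have hnorm : ‖N‖ ^ 2 = ‖n₁‖ ^ 2 + ‖n₂‖ ^ 2 := by
    rw [hsplit, norm_add_sq_real, horth]
    ring
  have hterm : ∀ ℓ, ‖(1 - Cb ℓ) * N * (1 - Rb ℓ)‖ ≤ ‖(1 - Cb ℓ) * n₁‖ + ‖(1 - Rb ℓ) * n₂ᵀ‖ :=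
    fun ℓ => calc
      _ = ‖(1 - Cb ℓ) * n₁ * (1 - Rb ℓ) + (1 - Cb ℓ) * (n₂ * (1 - Rb ℓ))‖ := by
        rw [hsplit, Matrix.mul_add, Matrix.add_mul, Matrix.mul_assoc _ n₂]
      _ ≤ ‖(1 - Cb ℓ) * n₁‖ + ‖n₂ * (1 - Rb ℓ)‖ :=
        (norm_add_le _ _).trans (add_le_add ((hRb ℓ).one_sub.norm_mul_le_norm_left _)
          ((hCb ℓ).one_sub.norm_mul_le_norm_right _))
      _ = _ := by rw [← frobenius_norm_transpose (n₂ * _), transpose_mul, (hRb ℓ).one_sub.1]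
  have hcol := hPC.sum_norm_one_sub_mul_sq_le hB hCb hα hσC (X := n₁)
    (by rw [← Matrix.mul_assoc, hPC.2])
  have hrow := hPR.sum_norm_one_sub_mul_sq_le hB hRb hα hσR (X := n₂ᵀ)
    (by rw [transpose_mul, hPR.1, ← Matrix.mul_assoc, hPR.2])
  rw [frobenius_norm_transpose] at hrow
  have hB' : (0 : ℝ) < B := by exact_mod_cast hB
  rw [inner_sub_avgTangentProj_self hB hCb hRb]
  calc (B : ℝ)⁻¹ * ∑ ℓ, ‖(1 - Cb ℓ) * N * (1 - Rb ℓ)‖ ^ 2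
      ≤ (B : ℝ)⁻¹ * ∑ ℓ, 2 * (‖(1 - Cb ℓ) * n₁‖ ^ 2 + ‖(1 - Rb ℓ) * n₂ᵀ‖ ^ 2) := by
        gcongr with ℓ
        nlinarith [hterm ℓ, norm_nonneg ((1 - Cb ℓ) * N * (1 - Rb ℓ)),
          sq_nonneg (‖(1 - Cb ℓ) * n₁‖ - ‖(1 - Rb ℓ) * n₂ᵀ‖)]
    _ ≤ (B : ℝ)⁻¹ * (2 * (B * (1 - α ^ 2) * ‖n₁‖ ^ 2 + B * (1 - α ^ 2) * ‖n₂‖ ^ 2)) := by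
        rw [← Finset.mul_sum, Finset.sum_add_distrib]
        gcongr
    _ = 2 * (1 - α ^ 2) * ‖N‖ ^ 2 := by
        rw [hnorm]
        field_simp
    -- `4 (1 - α) - 2 (1 - α ^ 2) = 2 (1 - α) ^ 2`
    _ ≤ 4 * (1 - α) * ‖N‖ ^ 2 := by nlinarith [sq_nonneg (1 - α), sq_nonneg ‖N‖]

end Matrix

/-- Proposition 7: if the row/column spaces of `T = T(C,R)` satisfy
`σ_min(P_C P_avg^C P_C) ≥ α` on `C` and `σ_min(P_R P_avg^R P_R) ≥ α` on `R`, where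
`P_avg^C`, `P_avg^R`, `P_avg` are the averages of the bagged column-space, row-space and
tangent-space projections, then `‖P_T (I − P_avg) P_T‖₂ ≤ 4(1−α)`; consequently
`σ_min(P_T P_avg P_T)` restricted to `T` is at least `1 − 4(1−α)`, i.e. `T ∈ 𝒯_{1−4(1−α)}`. -/
theorem modified_algorithm_stable_tangent_space
    {p₁ p₂ B : ℕ} (hB : 0 < B)
    (Cb : Fin B → Matrix (Fin p₁) (Fin p₁) ℝ)
    (Rb : Fin B → Matrix (Fin p₂) (Fin p₂) ℝ)
    (hCb : ∀ ℓ, (Cb ℓ)ᵀ = Cb ℓ ∧ Cb ℓ * Cb ℓ = Cb ℓ)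
    (hRb : ∀ ℓ, (Rb ℓ)ᵀ = Rb ℓ ∧ Rb ℓ * Rb ℓ = Rb ℓ)
    (PavgC : Matrix (Fin p₁) (Fin p₁) ℝ) (PavgR : Matrix (Fin p₂) (Fin p₂) ℝ)
    (hPavgC : PavgC = (B : ℝ)⁻¹ • ∑ ℓ, Cb ℓ)
    (hPavgR : PavgR = (B : ℝ)⁻¹ • ∑ ℓ, Rb ℓ)
    (Pavg : Matrix (Fin p₁) (Fin p₂) ℝ → Matrix (Fin p₁) (Fin p₂) ℝ)
    (hPavg : ∀ M, Pavg M =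
      (B : ℝ)⁻¹ • ∑ ℓ, (Cb ℓ * M + M * Rb ℓ - Cb ℓ * M * Rb ℓ))
    (PC : Matrix (Fin p₁) (Fin p₁) ℝ) (PR : Matrix (Fin p₂) (Fin p₂) ℝ)
    (hPCsym : PCᵀ = PC) (hPCidem : PC * PC = PC)
    (hPRsym : PRᵀ = PR) (hPRidem : PR * PR = PR)
    (PT : Matrix (Fin p₁) (Fin p₂) ℝ → Matrix (Fin p₁) (Fin p₂) ℝ)
    (hPT : ∀ M, PT M = PC * M + M * PR - PC * M * PR)
    (α : ℝ) (hα0 : 0 < α) (hα1 : α ≤ 1)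
    (hσC : ∀ x : Fin p₁ → ℝ, PC *ᵥ x = x →
      α * vnorm x ≤ vnorm ((PC * PavgC * PC) *ᵥ x))
    (hσR : ∀ y : Fin p₂ → ℝ, PR *ᵥ y = y →
      α * vnorm y ≤ vnorm ((PR * PavgR * PR) *ᵥ y)) :
    (∀ M : Matrix (Fin p₁) (Fin p₂) ℝ,
        fnorm (PT (PT M - Pavg (PT M))) ≤ 4 * (1 - α) * fnorm M) ∧
      (∀ M : Matrix (Fin p₁) (Fin p₂) ℝ, PT M = M →
        (1 - 4 * (1 - α)) * fnorm M ≤ fnorm (PT (Pavg (PT M)))) := by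
  subst hPavgC hPavgR
  have hPC : IsOrthogonalProjection PC := ⟨hPCsym, hPCidem⟩
  have hPR : IsOrthogonalProjection PR := ⟨hPRsym, hPRidem⟩
  obtain rfl : PT = tangentProj PC PR := funext hPT
  obtain rfl : Pavg = avgTangentProj Cb Rb :=
    funext fun M => (hPavg M).trans (avgTangentProj_apply Cb Rb M).symm
  have hbound : ∀ M, ‖tangentProj PC PR (tangentProj PC PR M - avgTangentProj Cb Rb
      (tangentProj PC PR M))‖ ≤ 4 * (1 - α) * ‖M‖ :=
    (hPC.isSymmetricProjection_tangentProj hPR).norm_compress_sub_le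
      (isSymmetric_avgTangentProj hCb hRb) (by linarith)
      (fun N _ => by rw [inner_sub_avgTangentProj_self hB hCb hRb]; positivity)
      (fun N hN => inner_sub_avgTangentProj_le hB hCb hRb hPC hPR hα0.le hσC hσR hN)
  simp only [fnorm_eq_norm]
  refine ⟨hbound, fun M hM => ?_⟩
  have h := hbound M
  rw [hM, map_sub, hM] at h
  rw [hM]
  linarith [norm_sub_norm_le M (tangentProj PC PR (avgTangentProj Cb Rb M))]
end
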